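/- For an integer d, there exists a primitive v ∈ Γ with (v.v) < 0 and disc(K_v) = d if and only if d > 0 and d ≡ 0 or 2 (mod 6). -/

import Mathlib

open scoped BigOperators

noncomputable section

/-- The negative definite `E₈` Gram matrix. -/
def E8M : Matrix (Fin 8) (Fin 8) ℤ := - CartanMatrix.E₈

/-- The Gram matrix of the cubic lattice `Γ̄ = E₈(-1)² ⊕ U² ⊕ I₀,₃` on `ℤ²³`. -/
def gramC : Fin 23 → Fin 23 → ℤ := fun i j =>
  if i.val < 8 ∧ j.val < 8 then
    E8M ⟨i.val % 8, Nat.mod_lt _ (by norm_num)⟩ ⟨j.val % 8, Nat.mod_lt _ (by norm_num)⟩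
  else if 8 ≤ i.val ∧ i.val < 16 ∧ 8 ≤ j.val ∧ j.val < 16 then
    E8M ⟨(i.val - 8) % 8, Nat.mod_lt _ (by norm_num)⟩ ⟨(j.val - 8) % 8, Nat.mod_lt _ (by norm_num)⟩
  else if (i.val = 16 ∧ j.val = 17) ∨ (i.val = 17 ∧ j.val = 16) ∨
      (i.val = 18 ∧ j.val = 19) ∨ (i.val = 19 ∧ j.val = 18) then 1
  else if 20 ≤ i.val ∧ i = j then -1
  else 0

/-- The bilinear form of the cubic lattice `Γ̄`. -/
def GB (x y : Fin 23 → ℤ) : ℤ := ∑ i, ∑ j, gramC i j * x i * y j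

/-- The class `h² = (0,…,0,1,1,1)`. -/
def h2 : Fin 23 → ℤ := Pi.single 20 1 + Pi.single 21 1 + Pi.single 22 1

/-- A vector is primitive if it is not `m • w` with `|m| ≥ 2`. -/
def PrimitiveC (v : Fin 23 → ℤ) : Prop :=
  ¬ ∃ (m : ℤ) (w : Fin 23 → ℤ), 2 ≤ |m| ∧ v = m • w

/-- Membership in `Γ = (h²)^⊥ ⊂ Γ̄`. -/
def inGamma (x : Fin 23 → ℤ) : Prop := GB h2 x = 0

lemma GB_add_right (x y z : Fin 23 → ℤ) : GB x (y + z) = GB x y + GB x z := by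
  simp [GB, Pi.add_apply, mul_add, Finset.sum_add_distrib]

lemma GB_smul_right (c : ℤ) (x y : Fin 23 → ℤ) : GB x (c • y) = c * GB x y := by
  simp only [GB, Finset.mul_sum]
  refine Finset.sum_congr rfl fun i _ => Finset.sum_congr rfl fun j _ => ?_
  simp only [Pi.smul_apply, smul_eq_mul]; ring

/-- `Γ = (h²)^⊥` as a submodule of `ℤ²³`. -/
def Gamma : Submodule ℤ (Fin 23 → ℤ) where
  carrier := {x | GB h2 x = 0}
  add_mem' := by
    intro a b ha hb
    simp only [Set.mem_setOf_eq] at *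
    rw [GB_add_right, ha, hb, add_zero]
  zero_mem' := by simp [GB]
  smul_mem' := by
    intro c x hx
    simp only [Set.mem_setOf_eq] at *
    rw [GB_smul_right, hx, mul_zero]

/-- The saturation of a submodule. -/
def sat {R M : Type*} [CommRing R] [IsDomain R] [AddCommGroup M] [Module R M] (N : Submodule R M) :
    Submodule R M where
  carrier := {x | ∃ n : R, n ≠ 0 ∧ n • x ∈ N}
  add_mem' := by
    rintro x y ⟨n, hn, hx⟩ ⟨m, hm, hy⟩
    refine ⟨n * m, mul_ne_zero hn hm, ?_⟩
    have h1 : (n * m) • (x + y) = m • (n • x) + n • (m • y) := by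
      rw [smul_add, mul_comm n m, mul_smul, mul_smul, smul_comm m n y]
    rw [h1]
    exact N.add_mem (N.smul_mem m hx) (N.smul_mem n hy)
  zero_mem' := ⟨1, one_ne_zero, by simp⟩
  smul_mem' := by
    rintro c x ⟨n, hn, hx⟩
    exact ⟨n, hn, by rw [smul_comm]; exact N.smul_mem c hx⟩

/-- The saturation `K_v` of `ℤh² + ℤv` in `Γ̄`. -/
def Kv (v : Fin 23 → ℤ) : Submodule ℤ (Fin 23 → ℤ) :=
  sat (Submodule.span ℤ ({h2, v} : Set (Fin 23 → ℤ)))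

/-- `d` is the discriminant of `K_v`: some ℤ-basis of `K_v` has Gram determinant `d`. -/
def discIs (v : Fin 23 → ℤ) (d : ℤ) : Prop :=
  ∃ x y : Fin 23 → ℤ, Kv v = Submodule.span ℤ ({x, y} : Set (Fin 23 → ℤ)) ∧
    d = GB x x * GB y y - GB x y * GB y x

/-- The index of `ℤh² + ℤv` in its saturation `K_v`. -/
def idx (v : Fin 23 → ℤ) : ℕ :=
  (Submodule.span ℤ ({h2, v} : Set (Fin 23 → ℤ))).toAddSubgroup.relIndex
    (Kv v).toAddSubgroup

/-- Isometries of the cubic lattice `Γ̄`. -/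
def IsIsomC (g : (Fin 23 → ℤ) ≃ₗ[ℤ] (Fin 23 → ℤ)) : Prop := ∀ x y, GB (g x) (g y) = GB x y

end

/-!
Write `K_v = ℤx + ℤy`, `h² = px + qy` and `v = rx + sy`. Comparing Gram determinants,
`(ps - qr)² · disc K_v = (h².h²)(v.v) - (h².v)² = -3 (v.v) > 0`. Since `h²` is primitive, `p` and
`q` are coprime. As `h²` is a characteristic vector of `Γ̄` (`(z.z) ≡ (h².z) mod 2`) of odd square,
`disc K_v` is even; and `h²` is isotropic mod `3` with `(p, q) ≢ 0 mod 3`, which rules out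
`disc K_v ≡ 1 mod 3`.

Conversely, let `e, f` be a hyperbolic pair and `ℓ` a vector of square `-1` in the `I₀,₃` summand.
For `v = e - k f` one gets `K_v = ℤh² + ℤv` of discriminant `6k`, and for `v = 3w - h²` with
`w = e - n f + ℓ` one gets `K_v = ℤh² + ℤw` of discriminant `6n + 2`.
-/

open Submodule
open LinearMap (BilinForm)

section Saturation

variable {R M : Type*} [CommRing R] [IsDomain R] [AddCommGroup M] [Module R M]

lemma le_sat (N : Submodule R M) : N ≤ sat N :=
  fun x hx => ⟨1, one_ne_zero, by rwa [one_smul]⟩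

lemma sat_mono {N L : Submodule R M} (h : N ≤ L) : sat N ≤ sat L :=
  fun _ ⟨n, hn, hx⟩ => ⟨n, hn, h hx⟩

lemma sat_eq_of_le_of_le {N L : Submodule R M} (hNL : N ≤ L) (hLN : L ≤ sat N)
    (hL : sat L ≤ L) : sat N = L :=
  le_antisymm ((sat_mono hNL).trans hL) hLN

lemma sat_span_pair_le [Module.IsTorsionFree R M] {x y : M} (φ ψ : M →ₗ[R] R)
    (hφx : φ x = 1) (hφy : φ y = 0) (hψx : ψ x = 0) (hψy : ψ y = 1) :
    sat (span R {x, y}) ≤ span R {x, y} := by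
  rintro z ⟨n, hn, hz⟩
  obtain ⟨a, b, hab⟩ := mem_span_pair.mp hz
  have hφ : n * φ z = a := by simpa [hφx, hφy] using congrArg φ hab.symm
  have hψ : n * ψ z = b := by simpa [hψx, hψy] using congrArg ψ hab.symm
  have : n • z = n • (φ z • x + ψ z • y) := by
    rw [← hab, smul_add, smul_smul, smul_smul, hφ, hψ]
  rw [smul_right_injective M hn this]
  exact mem_span_pair.mpr ⟨_, _, rfl⟩

end Saturation

namespace LinearMap.BilinForm

variable {R M : Type*} [CommRing R] [AddCommGroup M] [Module R M]

def gramDet (B : BilinForm R M) (x y : M) : R :=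
  B x x * B y y - B x y * B y x

lemma gramDet_add_smul (B : BilinForm R M) (x y : M) (p q r s : R) :
    gramDet B (p • x + q • y) (r • x + s • y) = (p * s - q * r) ^ 2 * gramDet B x y := by
  simp only [gramDet, map_add, map_smul, LinearMap.add_apply, LinearMap.smul_apply, smul_eq_mul]
  ring

variable (B : BilinForm ℤ M)

def IsCharacteristic (h : M) : Prop := ∀ z, B z z ≡ B h z [ZMOD 2]

variable {B}

lemma isCharacteristic_of_span_eq_top (hB : B.IsSymm) {s : Set M} (hs : span ℤ s = ⊤) {h : M}
    (hchar : ∀ z ∈ s, B z z ≡ B h z [ZMOD 2]) : IsCharacteristic B h := by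
  intro z
  induction (hs ▸ mem_top : z ∈ span ℤ s) using span_induction with
  | mem z hz => exact hchar z hz
  | zero => simp [Int.ModEq]
  | add x y _ _ hx hy =>
    calc B (x + y) (x + y) = B x x + B y y + 2 * B x y := by
          simp only [map_add, LinearMap.add_apply, hB.eq y x]; ring
      _ ≡ B h x + B h y + 0 [ZMOD 2] :=
          (hx.add hy).add (Int.modEq_zero_iff_dvd.mpr (dvd_mul_right 2 _))
      _ = B h (x + y) := by rw [map_add, add_zero]
  | smul c x _ hx =>
    have hc : c * c ≡ c [ZMOD 2] := Int.modEq_iff_dvd.mpr <| by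
      rw [show c - c * c = -(c * (c - 1)) by ring]
      exact (Int.even_mul_pred_self c).neg.two_dvd
    calc B (c • x) (c • x) = c * c * B x x := by
          simp only [map_smul, LinearMap.smul_apply, smul_eq_mul]; ring
      _ ≡ c * B h x [ZMOD 2] := hc.mul hx
      _ = B h (c • x) := by rw [map_smul, smul_eq_mul]

lemma two_dvd_gramDet (hB : B.IsSymm) {h x y : M} (hh : IsCharacteristic B h)
    (hodd : Odd (B h h)) {p q : ℤ} (hpq : p • x + q • y = h) : 2 ∣ gramDet B x y := by
  have key : ∀ a b c p q : ZMod 2, a = p * a + q * b → c = p * b + q * c →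
      p * p * a + 2 * p * q * b + q * q * c = 1 → a * c - b * b = 0 := by decide
  have hx := (ZMod.intCast_eq_intCast_iff _ _ 2).mpr (hh x)
  have hy := (ZMod.intCast_eq_intCast_iff _ _ 2).mpr (hh y)
  have hhh := ZMod.intCast_eq_one_iff_odd.mpr hodd
  simp only [← hpq, map_add, map_smul, LinearMap.add_apply, LinearMap.smul_apply, smul_eq_mul,
    hB.eq y x] at hx hy hhh
  push_cast at hx hy hhh
  refine (ZMod.intCast_zmod_eq_zero_iff_dvd _ 2).mp ?_
  simp only [gramDet, hB.eq y x]
  push_cast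
  exact key _ _ _ _ _ hx hy (by rw [← hhh]; ring)

lemma gramDet_not_modEq_one_three (hB : B.IsSymm) {x y : M} {p q : ℤ} (hpq : IsCoprime p q)
    (h3 : 3 ∣ B (p • x + q • y) (p • x + q • y)) : ¬ gramDet B x y ≡ 1 [ZMOD 3] := by
  intro hdet
  -- a binary form of determinant `1` over `𝔽₃` is anisotropic, as `-1` is not a square mod `3`
  have key : ∀ a b c p q : ZMod 3, p * p * a + 2 * p * q * b + q * q * c = 0 →
      a * c - b * b = 1 → p = 0 ∧ q = 0 := by decide
  have h3' := (ZMod.intCast_zmod_eq_zero_iff_dvd _ 3).mpr h3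
  have hdet' := (ZMod.intCast_eq_intCast_iff _ _ 3).mpr hdet
  simp only [gramDet, map_add, map_smul, LinearMap.add_apply, LinearMap.smul_apply, smul_eq_mul,
    hB.eq y x] at h3' hdet'
  push_cast at h3' hdet'
  obtain ⟨hp, hq⟩ := key _ _ _ (p : ZMod 3) q (by rw [← h3']; ring) hdet'
  have hunit := hpq.isUnit_of_dvd' ((ZMod.intCast_zmod_eq_zero_iff_dvd _ 3).mp hp)
    ((ZMod.intCast_zmod_eq_zero_iff_dvd _ 3).mp hq)
  norm_num [Int.isUnit_iff] at hunit

end LinearMap.BilinForm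

open LinearMap.BilinForm

lemma primitiveC_of_isUnit_apply {v : Fin 23 → ℤ} (i : Fin 23) (h : IsUnit (v i)) :
    PrimitiveC v := by
  rintro ⟨m, w, hm, rfl⟩
  have := Int.isUnit_iff_abs_eq.mp (isUnit_of_mul_isUnit_left (h : IsUnit (m * w i)))
  omega

lemma PrimitiveC.isCoprime {x y : Fin 23 → ℤ} {p q : ℤ} (h : PrimitiveC (p • x + q • y)) :
    IsCoprime p q := by
  rw [Int.isCoprime_iff_gcd_eq_one]
  by_contra hg
  obtain ⟨p', hp⟩ := Int.gcd_dvd_left p q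
  obtain ⟨q', hq⟩ := Int.gcd_dvd_right p q
  have hv : p • x + q • y = (Int.gcd p q : ℤ) • (p' • x + q' • y) := by
    rw [smul_add, ← mul_smul, ← mul_smul, ← hp, ← hq]
  rcases Nat.lt_or_ge (Int.gcd p q) 2 with hlt | hge
  · have h0 : Int.gcd p q = 0 := by omega
    exact h ⟨2, 0, by norm_num, by rw [hv, h0]; simp⟩
  · exact h ⟨_, _, by rw [Nat.abs_cast]; exact_mod_cast hge, hv⟩

lemma gramC_symm : ∀ i j, gramC i j = gramC j i := by decide

lemma GB_comm (x y : Fin 23 → ℤ) : GB x y = GB y x := by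
  rw [GB, GB, Finset.sum_comm]
  exact Finset.sum_congr rfl fun i _ => Finset.sum_congr rfl fun j _ => by rw [gramC_symm]; ring

def gbForm : BilinForm ℤ (Fin 23 → ℤ) :=
  LinearMap.mk₂ ℤ GB
    (fun x y z => by rw [GB_comm, GB_add_right, GB_comm z, GB_comm z])
    (fun c x y => by rw [GB_comm, GB_smul_right, GB_comm, smul_eq_mul])
    GB_add_right (fun c x y => GB_smul_right c x y)

lemma gbForm_apply (x y : Fin 23 → ℤ) : gbForm x y = GB x y := rfl

lemma gbForm_isSymm : gbForm.IsSymm := ⟨GB_comm⟩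

lemma GB_single_single (i j : Fin 23) : GB (Pi.single i 1) (Pi.single j 1) = gramC i j := by
  simp [GB, Pi.single_apply]

lemma h2_eq : h2 = Pi.single 20 1 + Pi.single 21 1 + Pi.single 22 1 := rfl

lemma GB_h2_h2 : GB h2 h2 = -3 := by decide

lemma primitiveC_h2 : PrimitiveC h2 := primitiveC_of_isUnit_apply 20 (by decide)

lemma h2_isCharacteristic : gbForm.IsCharacteristic h2 := by
  refine isCharacteristic_of_span_eq_top gbForm_isSymm (Pi.basisFun ℤ (Fin 23)).span_eq ?_
  rintro _ ⟨i, rfl⟩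
  simp only [Pi.basisFun_apply, h2_eq, map_add, LinearMap.add_apply, gbForm_apply,
    GB_single_single]
  revert i
  decide

lemma h2_mem_Kv (v : Fin 23 → ℤ) : h2 ∈ Kv v :=
  le_sat _ (subset_span (by simp))

lemma mem_Kv_self (v : Fin 23 → ℤ) : v ∈ Kv v :=
  le_sat _ (subset_span (by simp))

theorem pos_and_emod_six_of_discIs {v : Fin 23 → ℤ} {d : ℤ} (hv : inGamma v) (hneg : GB v v < 0)
    (hd : discIs v d) : 0 < d ∧ (d % 6 = 0 ∨ d % 6 = 2) := by
  obtain ⟨x, y, hK, hd⟩ := hd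
  replace hd : d = gbForm.gramDet x y := hd
  obtain ⟨p, q, hpq⟩ := mem_span_pair.mp (hK ▸ h2_mem_Kv v)
  obtain ⟨r, s, hrs⟩ := mem_span_pair.mp (hK ▸ mem_Kv_self v)
  have hdet : -3 * GB v v = (p * s - q * r) ^ 2 * d := by
    rw [hd, ← gramDet_add_smul, hpq, hrs, gramDet]
    simp only [gbForm_apply, GB_h2_h2, GB_comm v h2, show GB h2 v = 0 from hv]
    ring
  have hpos : 0 < d := pos_of_mul_pos_right (by linarith) (sq_nonneg (p * s - q * r))
  have h2dvd : 2 ∣ d := hd ▸ two_dvd_gramDet gbForm_isSymm h2_isCharacteristic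
    (by rw [gbForm_apply, GB_h2_h2]; decide) hpq
  have h3 : ¬ d ≡ 1 [ZMOD 3] := hd ▸ gramDet_not_modEq_one_three gbForm_isSymm
    (hpq ▸ primitiveC_h2).isCoprime (by rw [hpq, gbForm_apply, GB_h2_h2]; norm_num)
  unfold Int.ModEq at h3
  omega

/-- `e - n f + ε ℓ`, where `e = e₁₆`, `f = e₁₇` span the first hyperbolic plane and `ℓ = e₂₀`. -/
def hypVec (n ε : ℤ) : Fin 23 → ℤ := Pi.single 16 1 - n • Pi.single 17 1 + ε • Pi.single 20 1

section hypVec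

variable (n ε : ℤ)

lemma GB_hypVec_self : GB (hypVec n ε) (hypVec n ε) = -2 * n - ε ^ 2 := by
  rw [hypVec, ← gbForm_apply]
  simp only [map_add, map_sub, map_smul, LinearMap.add_apply, LinearMap.sub_apply,
    LinearMap.smul_apply, gbForm_apply, GB_single_single]
  norm_num [gramC, Fin.ext_iff]
  ring

lemma GB_h2_hypVec : GB h2 (hypVec n ε) = -ε := by
  rw [hypVec, h2_eq, ← gbForm_apply]
  simp only [map_add, map_sub, map_smul, LinearMap.add_apply, gbForm_apply, GB_single_single]
  norm_num [gramC, Fin.ext_iff]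

lemma gramDet_h2_hypVec : gbForm.gramDet h2 (hypVec n ε) = 6 * n + 2 * ε ^ 2 := by
  rw [gramDet, gbForm_apply, gbForm_apply, gbForm_apply, gbForm_apply, GB_comm (hypVec n ε) h2,
    GB_h2_h2, GB_hypVec_self, GB_h2_hypVec]
  ring

lemma sat_span_h2_hypVec_le : sat (span ℤ {h2, hypVec n ε}) ≤ span ℤ {h2, hypVec n ε} :=
  sat_span_pair_le (LinearMap.proj 21) (LinearMap.proj 16) rfl (by simp [hypVec]) rfl
    (by simp [hypVec])

end hypVec

lemma exists_discIs_six_mul {k : ℤ} (hk : 0 < k) :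
    ∃ v, inGamma v ∧ PrimitiveC v ∧ GB v v < 0 ∧ discIs v (6 * k) := by
  refine ⟨hypVec k 0, ?_, primitiveC_of_isUnit_apply 16 (by simp [hypVec]),
    by rw [GB_hypVec_self]; linarith, h2, hypVec k 0,
    sat_eq_of_le_of_le le_rfl (le_sat _) (sat_span_h2_hypVec_le k 0), ?_⟩
  · rw [inGamma, GB_h2_hypVec, neg_zero]
  · change 6 * k = gbForm.gramDet h2 (hypVec k 0)
    rw [gramDet_h2_hypVec]
    ring

lemma exists_discIs_six_mul_add_two {n : ℤ} (hn : 0 ≤ n) :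
    ∃ v, inGamma v ∧ PrimitiveC v ∧ GB v v < 0 ∧ discIs v (6 * n + 2) := by
  have hww := GB_hypVec_self n 1
  have hh2w := GB_h2_hypVec n 1
  set w := hypVec n 1
  set v := (3 : ℤ) • w - h2 with hv
  have hh2v : GB h2 v = 0 := by
    simp only [hv, ← gbForm_apply, map_sub, map_smul, smul_eq_mul]
    simp only [gbForm_apply, hh2w, GB_h2_h2]
    norm_num
  have hvv : GB v v = -18 * n - 6 := by
    simp only [hv, ← gbForm_apply, map_sub, map_smul, LinearMap.sub_apply, LinearMap.smul_apply,
      smul_eq_mul]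
    simp only [gbForm_apply, GB_comm w h2, hh2w, hww, GB_h2_h2]
    ring
  refine ⟨v, hh2v, primitiveC_of_isUnit_apply 21 (by simp [v, w, hypVec, h2_eq]),
    by rw [hvv]; linarith, h2, w, ?_, ?_⟩
  · refine sat_eq_of_le_of_le ?_ ?_ (sat_span_h2_hypVec_le n 1)
    · refine span_le.mpr (Set.insert_subset_iff.mpr ⟨subset_span (by simp), ?_⟩)
      exact Set.singleton_subset_iff.mpr (mem_span_pair.mpr ⟨-1, 3, by rw [hv]; module⟩)
    · refine span_le.mpr (Set.insert_subset_iff.mpr ⟨h2_mem_Kv v, ?_⟩)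
      exact Set.singleton_subset_iff.mpr
        ⟨3, by norm_num, mem_span_pair.mpr ⟨1, 1, by rw [hv]; module⟩⟩
  · change 6 * n + 2 = gbForm.gramDet h2 w
    rw [gramDet_h2_hypVec]
    ring

/-- An integer `d` arises as `disc K_v` for some primitive `v ∈ Γ` of negative
square iff `d > 0` and `d ≡ 0` or `2 (mod 6)`. -/
theorem stmt_7 (d : ℤ) :
    (∃ v : Fin 23 → ℤ, inGamma v ∧ PrimitiveC v ∧ GB v v < 0 ∧ discIs v d) ↔
    (0 < d ∧ (d % 6 = 0 ∨ d % 6 = 2)) := by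
  constructor
  · rintro ⟨v, hv, -, hneg, hd⟩
    exact pos_and_emod_six_of_discIs hv hneg hd
  · rintro ⟨hd, hmod | hmod⟩
    · obtain ⟨k, rfl⟩ : ∃ k, d = 6 * k := ⟨d / 6, by omega⟩
      exact exists_discIs_six_mul (by omega)
    · obtain ⟨n, rfl⟩ : ∃ n, d = 6 * n + 2 := ⟨d / 6, by omega⟩
      exact exists_discIs_six_mul_add_two (by omega)
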